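/- arXiv:2207.07856 — 3 statements merged into one kernel-verified Lean document; each statement's English description precedes it below -/
import Mathlib

section
/- The map from ℂP¹ × ℂP¹ to ℂP³ sending the pair of classes of (a₁, a₂) and (b₁, b₂) (nonzero vectors in ℂ²) to the class of ( (i/2)(a₁b₁ + a₂b₂), (1/2)(a₂b₂ − a₁b₁), (1/2)(a₁b₂ + a₂b₁), (i/2)(a₂b₁ − a₁b₂) ) is well defined (the image vector is nonzero) and is a bijection from ℂP¹ × ℂP¹ onto the quadric Q₄ = {(z₁ : z₂ : z₃ : z₄) ∈ ℂP³ : z₁² + z₂² + z₃² + z₄² = 0}. -/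
/-!
The map factors as the Segre map `(a, b) ↦ vecMulVec a b` from `ℂP¹ × ℂP¹` onto the rank-one
`2 × 2` matrices, i.e. onto the quadric `det = 0` in `ℙ(M₂(ℂ))`, followed by a linear change of
coordinates `M₂(ℂ) ≃ ℂ⁴` under which `det` becomes `-(z₁² + z₂² + z₃² + z₄²)`.
A matrix `a bᵀ` with `a, b ≠ 0` determines `a` and `b` up to scalars (read them off a nonzero
column and a nonzero row), and conversely a nonzero matrix whose `2 × 2` minors vanish is the
product of any nonzero column with a suitably rescaled row.
-/

open Complex Matrix Projectivization
open scoped LinearAlgebra.Projectivization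

namespace Matrix

variable {K m n : Type*} [Field K]

theorem exists_smul_eq_of_vecMulVec_eq {a a' : m → K} {b b' : n → K} (ha : a ≠ 0) (hb : b ≠ 0)
    (h : vecMulVec a b = vecMulVec a' b') : (∃ c : K, c • a' = a) ∧ ∃ d : K, d • b' = b := by
  obtain ⟨i, hi⟩ : ∃ i, a i ≠ 0 := Function.ne_iff.mp ha
  obtain ⟨j, hj⟩ : ∃ j, b j ≠ 0 := Function.ne_iff.mp hb
  refine ⟨⟨b' j / b j, funext fun k => ?_⟩, ⟨a' i / a i, funext fun l => ?_⟩⟩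
  · have := congr($h k j)
    simp only [vecMulVec_apply, Pi.smul_apply, smul_eq_mul] at this ⊢
    field_simp
    linear_combination -this
  · have := congr($h i l)
    simp only [vecMulVec_apply, Pi.smul_apply, smul_eq_mul] at this ⊢
    field_simp
    linear_combination -this

theorem exists_vecMulVec_eq_of_minors_eq {M : Matrix m n K} (hM : M ≠ 0)
    (h : ∀ i j k l, M i j * M k l = M i l * M k j) :
    ∃ (a : m → K) (b : n → K), a ≠ 0 ∧ b ≠ 0 ∧ vecMulVec a b = M := by
  obtain ⟨i, j, hij⟩ : ∃ i j, M i j ≠ 0 := by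
    by_contra! h0
    exact hM (Matrix.ext h0)
  refine ⟨fun k => M k j, fun l => M i l / M i j, Function.ne_iff.mpr ⟨i, hij⟩,
    Function.ne_iff.mpr ⟨j, by simp [hij]⟩, Matrix.ext fun k l => ?_⟩
  simp only [vecMulVec_apply]
  field_simp
  linear_combination -h i j k l

theorem minors_eq_of_det_eq_zero {M : Matrix (Fin 2) (Fin 2) K} (h : M.det = 0) (i j k l : Fin 2) :
    M i j * M k l = M i l * M k j := by
  rw [det_fin_two] at h
  fin_cases i <;> fin_cases j <;> fin_cases k <;> fin_cases l <;>
    simp only [Fin.zero_eta, Fin.mk_one] <;>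
    first | ring1 | linear_combination h | linear_combination -h

end Matrix

namespace Projectivization

variable {K n : Type*} [Field K]

noncomputable def segre (x : ℙ K (n → K) × ℙ K (n → K)) : ℙ K (Matrix n n K) :=
  mk K (vecMulVec x.1.rep x.2.rep) (vecMulVec_ne_zero x.1.rep_nonzero x.2.rep_nonzero)

theorem segre_mk {a b : n → K} (ha : a ≠ 0) (hb : b ≠ 0) :
    segre (mk K a ha, mk K b hb) = mk K (vecMulVec a b) (vecMulVec_ne_zero ha hb) := by
  obtain ⟨s, hs⟩ := exists_smul_eq_mk_rep K a ha
  obtain ⟨t, ht⟩ := exists_smul_eq_mk_rep K b hb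
  rw [segre, mk_eq_mk_iff]
  exact ⟨s * t, by simp [← hs, ← ht, Units.smul_def, smul_smul, mul_comm]⟩

theorem segre_injective : Function.Injective (segre : ℙ K (n → K) × ℙ K (n → K) → _) := by
  rintro ⟨x₁, x₂⟩ ⟨y₁, y₂⟩ h
  induction x₁ using ind with | h a ha => induction x₂ using ind with | h b hb =>
  induction y₁ using ind with | h a' ha' => induction y₂ using ind with | h b' hb' =>
  rw [segre_mk, segre_mk, mk_eq_mk_iff'] at h
  obtain ⟨u, hu⟩ := h
  rw [← smul_vecMulVec] at hu
  obtain ⟨⟨c, hc⟩, ⟨d, hd⟩⟩ := exists_smul_eq_of_vecMulVec_eq ha hb hu.symm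
  rw [smul_smul] at hc
  simp only [Prod.mk.injEq, mk_eq_mk_iff']
  exact ⟨⟨_, hc⟩, ⟨_, hd⟩⟩

theorem mk_mem_range_segre_iff {M : Matrix (Fin 2) (Fin 2) K} (hM : M ≠ 0) :
    mk K M hM ∈ Set.range segre ↔ M.det = 0 := by
  constructor
  · rintro ⟨⟨x₁, x₂⟩, h⟩
    induction x₁ using ind with | h a ha => induction x₂ using ind with | h b hb =>
    rw [segre_mk, eq_comm, mk_eq_mk_iff'] at h
    obtain ⟨c, rfl⟩ := h
    rw [det_smul, det_vecMulVec, mul_zero]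
  · intro h
    obtain ⟨a, b, ha, hb, rfl⟩ := exists_vecMulVec_eq_of_minors_eq hM (minors_eq_of_det_eq_zero h)
    exact ⟨_, segre_mk ha hb⟩

theorem sum_sq_rep_eq_zero_iff {ι : Type*} [Fintype ι] {z : ι → K} (hz : z ≠ 0) :
    ∑ i, (mk K z hz).rep i ^ 2 = 0 ↔ ∑ i, z i ^ 2 = 0 := by
  obtain ⟨c, hc⟩ := exists_smul_eq_mk_rep K z hz
  simp [← hc, Units.smul_def, mul_pow, ← Finset.mul_sum]

end Projectivization

noncomputable def detToSumSq : Matrix (Fin 2) (Fin 2) ℂ ≃ₗ[ℂ] (Fin 4 → ℂ) where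
  toFun M := ![I / 2 * (M 0 0 + M 1 1), 1 / 2 * (M 1 1 - M 0 0),
    1 / 2 * (M 0 1 + M 1 0), I / 2 * (M 1 0 - M 0 1)]
  invFun z := !![-I * z 0 - z 1, z 2 + I * z 3; z 2 - I * z 3, -I * z 0 + z 1]
  map_add' M N := by ext i; fin_cases i <;> simp <;> ring
  map_smul' c M := by ext i; fin_cases i <;> simp <;> ring
  left_inv M := by
    ext i j; fin_cases i <;> fin_cases j <;> simp <;> ring_nf <;> simp [I_sq] <;> ring
  right_inv z := by
    ext i; fin_cases i <;> simp <;> ring_nf <;> simp [I_sq]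

theorem detToSumSq_apply (M : Matrix (Fin 2) (Fin 2) ℂ) :
    detToSumSq M = ![I / 2 * (M 0 0 + M 1 1), 1 / 2 * (M 1 1 - M 0 0),
      1 / 2 * (M 0 1 + M 1 0), I / 2 * (M 1 0 - M 0 1)] :=
  rfl

theorem sum_sq_detToSumSq (M : Matrix (Fin 2) (Fin 2) ℂ) :
    ∑ i, detToSumSq M i ^ 2 = -M.det := by
  simp only [detToSumSq_apply, Fin.sum_univ_four, det_fin_two, cons_val_zero, cons_val_one,
    cons_val]
  linear_combination ((M 0 0 + M 1 1) ^ 2 + (M 1 0 - M 0 1) ^ 2) / 4 * I_sq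

/-- The Segre-type map `ℂP¹ × ℂP¹ → ℂP³`,
`((a₁ : a₂), (b₁ : b₂)) ↦ ((i/2)(a₁b₁ + a₂b₂) : (1/2)(a₂b₂ − a₁b₁) : (1/2)(a₁b₂ + a₂b₁) : (i/2)(a₂b₁ − a₁b₂))`,
is well defined (the image vector is nonzero) and is a bijection from `ℂP¹ × ℂP¹` onto the
quadric `Q₄ = {(z₁ : z₂ : z₃ : z₄) : z₁² + z₂² + z₃² + z₄² = 0} ⊂ ℂP³`. -/
theorem stmt2 :
    (∀ a₁ a₂ b₁ b₂ : ℂ, (![a₁, a₂] : Fin 2 → ℂ) ≠ 0 → (![b₁, b₂] : Fin 2 → ℂ) ≠ 0 →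
      (![Complex.I / 2 * (a₁ * b₁ + a₂ * b₂), (1 : ℂ) / 2 * (a₂ * b₂ - a₁ * b₁),
         (1 : ℂ) / 2 * (a₁ * b₂ + a₂ * b₁), Complex.I / 2 * (a₂ * b₁ - a₁ * b₂)] :
        Fin 4 → ℂ) ≠ 0) ∧
    ∃ F : Projectivization ℂ (Fin 2 → ℂ) × Projectivization ℂ (Fin 2 → ℂ) →
        Projectivization ℂ (Fin 4 → ℂ),
      (∀ (a₁ a₂ b₁ b₂ : ℂ) (ha : (![a₁, a₂] : Fin 2 → ℂ) ≠ 0)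
        (hb : (![b₁, b₂] : Fin 2 → ℂ) ≠ 0)
        (h' : (![Complex.I / 2 * (a₁ * b₁ + a₂ * b₂), (1 : ℂ) / 2 * (a₂ * b₂ - a₁ * b₁),
          (1 : ℂ) / 2 * (a₁ * b₂ + a₂ * b₁), Complex.I / 2 * (a₂ * b₁ - a₁ * b₂)] :
          Fin 4 → ℂ) ≠ 0),
        F (Projectivization.mk ℂ ![a₁, a₂] ha, Projectivization.mk ℂ ![b₁, b₂] hb) =
          Projectivization.mk ℂ
            ![Complex.I / 2 * (a₁ * b₁ + a₂ * b₂), (1 : ℂ) / 2 * (a₂ * b₂ - a₁ * b₁),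
              (1 : ℂ) / 2 * (a₁ * b₂ + a₂ * b₁), Complex.I / 2 * (a₂ * b₁ - a₁ * b₂)] h') ∧
      Function.Injective F ∧
      Set.range F = {p : Projectivization ℂ (Fin 4 → ℂ) |
        p.rep 0 ^ 2 + p.rep 1 ^ 2 + p.rep 2 ^ 2 + p.rep 3 ^ 2 = 0} := by
  set φ := detToSumSq
  refine ⟨fun a₁ a₂ b₁ b₂ ha hb => φ.map_ne_zero_iff.mpr (vecMulVec_ne_zero ha hb),
    map φ.toLinearMap φ.injective ∘ segre,
    fun a₁ a₂ b₁ b₂ ha hb _ => congrArg (map _ φ.injective) (segre_mk ha hb),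
    (map_injective _ φ.injective).comp segre_injective, ?_⟩
  ext p
  induction p using ind with | h z hz =>
  obtain ⟨M, rfl⟩ := φ.surjective z
  have hM : M ≠ 0 := φ.map_ne_zero_iff.mp hz
  rw [Set.range_comp, Set.mem_ofPred_eq, ← Fin.sum_univ_four (f := fun i => _ ^ 2),
    sum_sq_rep_eq_zero_iff, sum_sq_detToSumSq, neg_eq_zero, ← mk_mem_range_segre_iff hM]
  exact (map_injective _ φ.injective).mem_set_image (a := mk ℂ M hM)
end

section
/- For c ∈ ℂ and t ∈ ℝ set D(z, t) = |z|² + |z² + 2it + c|² and, where D > 0, U(z, t) = i(z² − 2it − c)/D(z, t). (a) If c is not purely imaginary, then D(z, t) > 0 for all (z, t) ∈ ℂ × ℝ, so U is smooth on ℂ × ℝ, and for each fixed t, |U(z, t)| = O(|z|⁻²) as |z| → ∞. (b) If c = iτ with τ ∈ ℝ, then at t = −τ/2 one has U(z, −τ/2) = i z²/(|z|² + |z|⁴) for z ≠ 0; in particular for every angle θ, lim_{r → 0⁺} U(r e^{iθ}, −τ/2) = i e^{2iθ}, and U(·, −τ/2) has no continuous extension to z = 0. -/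
open ComplexConjugate

/-- for the DSII solution `U(z, t) = i(z² − 2it − c)/D(z, t)` with
`D(z, t) = |z|² + |z² + 2it + c|²`:
(a) if `c` is not purely imaginary then `D > 0` everywhere, `U` is smooth on `ℂ × ℝ`,
and for fixed `t`, `|U(z, t)| = O(|z|⁻²)` as `|z| → ∞`;
(b) if `c = iτ` (`τ ∈ ℝ`), then at `t = −τ/2` one has `U = i z²/(|z|² + |z|⁴)` for
`z ≠ 0`, so `U(r e^{iθ}, −τ/2) → i e^{2iθ}` as `r → 0⁺`, and `U(·, −τ/2)` has no
continuous extension to `z = 0`. -/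
theorem stmt12 (c : ℂ) (D : ℂ → ℝ → ℝ) (U : ℂ → ℝ → ℂ)
    (hD : D = fun (z : ℂ) (t : ℝ) =>
      ‖z‖ ^ 2 + ‖z ^ 2 + 2 * Complex.I * (t : ℂ) + c‖ ^ 2)
    (hU : U = fun (z : ℂ) (t : ℝ) =>
      Complex.I * (z ^ 2 - 2 * Complex.I * (t : ℂ) - c) / (D z t : ℂ)) :
    (c.re ≠ 0 →
      (∀ (z : ℂ) (t : ℝ), 0 < D z t) ∧
      ContDiff ℝ (⊤ : ℕ∞) (fun p : ℂ × ℝ => U p.1 p.2) ∧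
      (∀ t : ℝ, ∃ C R : ℝ, ∀ z : ℂ, R ≤ ‖z‖ →
        ‖U z t‖ ≤ C / ‖z‖ ^ 2)) ∧
    (∀ τ : ℝ, c = Complex.I * (τ : ℂ) →
      (∀ z : ℂ, z ≠ 0 →
        U z (-τ / 2) = Complex.I * z ^ 2 /
          (((‖z‖ : ℝ) : ℂ) ^ 2 + ((‖z‖ : ℝ) : ℂ) ^ 4)) ∧
      (∀ θ : ℝ, Filter.Tendsto
        (fun r : ℝ => U ((r : ℂ) * Complex.exp (Complex.I * (θ : ℂ))) (-τ / 2))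
        (nhdsWithin 0 (Set.Ioi 0))
        (nhds (Complex.I * Complex.exp (2 * Complex.I * (θ : ℂ))))) ∧
      ¬∃ L : ℂ, Filter.Tendsto (fun z => U z (-τ / 2))
        (nhdsWithin 0 {(0 : ℂ)}ᶜ) (nhds L)) := by
  constructor
  · intro hc
    have hDpos : ∀ (z : ℂ) (t : ℝ), 0 < D z t := by
      intro z t
      rw [hD]
      rcases eq_or_ne z 0 with hz | hz
      · subst hz
        have hne : (0:ℂ) ^ 2 + 2 * Complex.I * (t : ℂ) + c ≠ 0 := by
          intro h
          apply hc
          have := congrArg Complex.re h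
          simp [Complex.add_re, Complex.mul_re] at this
          linarith [this]
        have : 0 < ‖(0:ℂ) ^ 2 + 2 * Complex.I * (t : ℂ) + c‖ :=
          norm_pos_iff.mpr hne
        positivity
      · have : 0 < ‖z‖ := norm_pos_iff.mpr hz
        positivity
    refine ⟨hDpos, ?_, ?_⟩
    · -- smoothness
      have hg : ContDiff ℝ (⊤ : ℕ∞) (fun p : ℂ × ℝ => p.1 ^ 2 + 2 * Complex.I * (p.2 : ℂ) + c) := by
        refine ContDiff.add (ContDiff.add ?_ ?_) contDiff_const
        · exact contDiff_fst.pow 2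
        · exact contDiff_const.mul (Complex.ofRealCLM.contDiff.comp contDiff_snd)
      have hDc : ContDiff ℝ (⊤ : ℕ∞) (fun p : ℂ × ℝ => D p.1 p.2) := by
        rw [hD]
        exact ((contDiff_norm_sq ℝ).comp contDiff_fst).add ((contDiff_norm_sq ℝ).comp hg)
      have hnum : ContDiff ℝ (⊤ : ℕ∞) (fun p : ℂ × ℝ =>
          Complex.I * (p.1 ^ 2 - 2 * Complex.I * (p.2 : ℂ) - c)) := by
        refine contDiff_const.mul (ContDiff.sub (ContDiff.sub ?_ ?_) contDiff_const)
        · exact contDiff_fst.pow 2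
        · exact contDiff_const.mul (Complex.ofRealCLM.contDiff.comp contDiff_snd)
      have hrw : (fun p : ℂ × ℝ => U p.1 p.2) = fun p : ℂ × ℝ =>
          Complex.I * (p.1 ^ 2 - 2 * Complex.I * (p.2 : ℂ) - c) *
            ((((D p.1 p.2)⁻¹ : ℝ)) : ℂ) := by
        rw [hU]
        funext p
        simp only [Complex.ofReal_inv, div_eq_mul_inv]
      rw [hrw]
      exact hnum.mul (Complex.ofRealCLM.contDiff.comp
        (hDc.inv fun p => (hDpos p.1 p.2).ne'))
    · -- decay
      intro t
      set A := ‖2 * Complex.I * (t : ℂ) + c‖ with hA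
      have hA0 : 0 ≤ A := norm_nonneg _
      refine ⟨8, 1 + 2 * A, fun z hz => ?_⟩
      have hz1 : 1 ≤ ‖z‖ := by linarith
      have h2A : 2 * A ≤ ‖z‖ := by linarith
      have hz2 : 2 * A ≤ ‖z‖ ^ 2 := by nlinarith
      set r := ‖z‖ with hr
      have hnum : ‖z ^ 2 - 2 * Complex.I * (t : ℂ) - c‖ ≤ 2 * r ^ 2 := by
        have h1 : z ^ 2 - 2 * Complex.I * (t : ℂ) - c = z ^ 2 - (2 * Complex.I * (t : ℂ) + c) := by
          ring
        rw [h1]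
        have := norm_sub_le (z ^ 2) (2 * Complex.I * (t : ℂ) + c)
        have h2 : ‖z ^ 2‖ = r ^ 2 := by rw [norm_pow]
        nlinarith
      have hden : r ^ 4 / 4 ≤ D z t := by
        rw [hD]
        have h3 : ‖z ^ 2‖ ≤ ‖z ^ 2 + 2 * Complex.I * (t : ℂ) + c‖ + A := by
          have := norm_sub_le (z ^ 2 + 2 * Complex.I * (t : ℂ) + c)
            (2 * Complex.I * (t : ℂ) + c)
          simpa using this
        have h2 : ‖z ^ 2‖ = r ^ 2 := by rw [norm_pow]
        have hB : 0 ≤ ‖z ^ 2 + 2 * Complex.I * (t : ℂ) + c‖ := norm_nonneg _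
        nlinarith [norm_nonneg z]
      have hUabs : ‖U z t‖ = ‖z ^ 2 - 2 * Complex.I * (t : ℂ) - c‖ / D z t := by
        rw [hU]
        simp [norm_div, norm_mul, Complex.norm_I, Complex.norm_real, Real.norm_eq_abs,
          abs_of_pos (hDpos z t)]
      rw [hUabs]
      have hr0 : 0 < r := lt_of_lt_of_le one_pos hz1
      have key : ‖z ^ 2 - 2 * Complex.I * (t : ℂ) - c‖ / D z t ≤
          (2 * r ^ 2) / (r ^ 4 / 4) :=
        div_le_div₀ (by positivity) hnum (by positivity) hden
      have heq : (2 * r ^ 2) / (r ^ 4 / 4) = 8 / r ^ 2 := by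
        field_simp
        ring
      rw [heq] at key
      exact key
  · intro τ hc
    have haux : ∀ z : ℂ, U z (-τ / 2) = Complex.I * z ^ 2 /
        (((‖z‖ : ℝ) : ℂ) ^ 2 + ((‖z‖ : ℝ) : ℂ) ^ 4) := by
      intro z
      have e1 : z ^ 2 + 2 * Complex.I * ((-τ / 2 : ℝ) : ℂ) + c = z ^ 2 := by
        rw [hc]; push_cast; ring
      have e2 : z ^ 2 - 2 * Complex.I * ((-τ / 2 : ℝ) : ℂ) - c = z ^ 2 := by
        rw [hc]; push_cast; ring
      rw [hU, hD]
      simp only [e1, e2, norm_pow]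
      congr 1
      push_cast
      ring
    have hlim2 : ∀ θ : ℝ, Filter.Tendsto
        (fun r : ℝ => U ((r : ℂ) * Complex.exp (Complex.I * (θ : ℂ))) (-τ / 2))
        (nhdsWithin 0 (Set.Ioi 0))
        (nhds (Complex.I * Complex.exp (2 * Complex.I * (θ : ℂ)))) := by
      intro θ
      have hlim : Filter.Tendsto (fun r : ℝ => Complex.I * Complex.exp (2 * Complex.I * (θ : ℂ)) /
          (1 + (r : ℂ) ^ 2)) (nhdsWithin 0 (Set.Ioi 0))
          (nhds (Complex.I * Complex.exp (2 * Complex.I * (θ : ℂ)))) := by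
        have hcont : ContinuousAt (fun r : ℝ => Complex.I * Complex.exp (2 * Complex.I * (θ : ℂ)) /
            (1 + (r : ℂ) ^ 2)) 0 := by
          apply ContinuousAt.div continuousAt_const
          · exact continuousAt_const.add ((Complex.continuous_ofReal.continuousAt).pow 2)
          · norm_num
        have := hcont.tendsto
        simp only [Complex.ofReal_zero] at this
        norm_num at this
        exact this.mono_left nhdsWithin_le_nhds
      refine hlim.congr' ?_
      filter_upwards [self_mem_nhdsWithin] with r hr
      have hr0 : (0:ℝ) < r := hr
      have hrne : (r : ℂ) ≠ 0 := Complex.ofReal_ne_zero.mpr hr0.ne'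
      rw [haux]
      have habs : ‖(r : ℂ) * Complex.exp (Complex.I * (θ : ℂ))‖ = r := by
        rw [norm_mul, Complex.norm_real, Complex.norm_exp]
        simp [abs_of_pos hr0]
      rw [habs]
      have hsq : ((r : ℂ) * Complex.exp (Complex.I * (θ : ℂ))) ^ 2
          = (r : ℂ) ^ 2 * Complex.exp (2 * Complex.I * (θ : ℂ)) := by
        rw [show (2:ℂ) * Complex.I * (θ:ℂ) = Complex.I * (θ:ℂ) + Complex.I * (θ:ℂ) by ring,
          Complex.exp_add]
        ring
      rw [hsq]
      have hden : ((r : ℂ) ^ 2 + (r : ℂ) ^ 4) ≠ 0 := by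
        intro h
        have : (r:ℂ)^2 * (1 + (r:ℂ)^2) = 0 := by rw [← h]; ring
        rcases mul_eq_zero.mp this with h1 | h1
        · exact hrne (pow_eq_zero_iff (by norm_num) |>.mp h1)
        · have : (1 + (r:ℂ)^2).re = 0 := by rw [h1]; rfl
          simp [Complex.add_re, Complex.one_re, ← Complex.ofReal_pow] at this
          nlinarith
      have h1r : (1 + (r:ℂ)^2) ≠ 0 := by
        intro h1
        have : (1 + (r:ℂ)^2).re = 0 := by rw [h1]; rfl
        simp [Complex.add_re, Complex.one_re, ← Complex.ofReal_pow] at this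
        nlinarith
      field_simp
    refine ⟨fun z _ => haux z, hlim2, ?_⟩
    rintro ⟨L, hL⟩
    have path : ∀ θ : ℝ, Filter.Tendsto (fun r : ℝ => (r : ℂ) * Complex.exp (Complex.I * (θ : ℂ)))
        (nhdsWithin 0 (Set.Ioi 0)) (nhdsWithin 0 {(0:ℂ)}ᶜ) := by
      intro θ
      rw [tendsto_nhdsWithin_iff]
      constructor
      · have hcont : Continuous (fun r : ℝ => (r : ℂ) * Complex.exp (Complex.I * (θ : ℂ))) :=
          Complex.continuous_ofReal.mul continuous_const
        have h0 : Filter.Tendsto (fun r : ℝ => (r : ℂ) * Complex.exp (Complex.I * (θ : ℂ)))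
            (nhds 0) (nhds 0) := by simpa using hcont.tendsto 0
        exact h0.mono_left nhdsWithin_le_nhds
      · filter_upwards [self_mem_nhdsWithin] with r hr
        exact mul_ne_zero (Complex.ofReal_ne_zero.mpr (ne_of_gt hr)) (Complex.exp_ne_zero _)
    have hcomp : ∀ θ : ℝ, Filter.Tendsto
        (fun r : ℝ => U ((r : ℂ) * Complex.exp (Complex.I * (θ : ℂ))) (-τ / 2))
        (nhdsWithin 0 (Set.Ioi 0)) (nhds L) := fun θ => hL.comp (path θ)
    -- from the second part we also know the limits are I e^{2iθ}; reprove quickly via haux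
    have hlim : ∀ θ : ℝ, L = Complex.I * Complex.exp (2 * Complex.I * (θ : ℂ)) :=
      fun θ => tendsto_nhds_unique (hcomp θ) (hlim2 θ)
    have h0 := hlim 0
    have hpi := hlim (Real.pi / 2)
    simp only [Complex.ofReal_zero, mul_zero, Complex.exp_zero, mul_one] at h0
    have e3 : 2 * Complex.I * ((Real.pi / 2 : ℝ) : ℂ) = Real.pi * Complex.I := by
      push_cast; ring
    rw [e3, Complex.exp_pi_mul_I] at hpi
    have hII : Complex.I = Complex.I * -1 := h0.symm.trans hpi
    apply Complex.I_ne_zero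
    linear_combination hII / 2
end

section
/- Let a, b ∈ ℝ with a ≠ 0. The initial datum of Ozawa's blow-up solution of the focusing Davey–Stewartson II equation, U(X, Y) = e^{−ib(4a)^{−1}(X² − Y²)} / ( a(1 + ((X/a)² + (Y/a)²)/2) ), satisfies ∫_{ℝ²} |U(X, Y)|² dX dY = 2π. -/
/-!
The phase has modulus one, so `|U|² = 4a² / (2a² + X² + Y²)²` is radial. In polar coordinates
the integral becomes `2π · 4a² · ∫₀^∞ r / (2a² + r²)² dr`, and `-1 / (2(c + r²))` is an
antiderivative of `r / (c + r²)²`, so the radial integral is `1 / (4a²)`.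
-/

open MeasureTheory Set Real

theorem integral_radial_prod (f : ℝ → ℝ) :
    ∫ p : ℝ × ℝ, f (p.1 ^ 2 + p.2 ^ 2) = 2 * π * ∫ r in Ioi (0 : ℝ), r * f (r ^ 2) := by
  have h : ∀ p : ℝ × ℝ, p.1 • f ((polarCoord.symm p).1 ^ 2 + (polarCoord.symm p).2 ^ 2) =
      (p.1 * f (p.1 ^ 2)) * (fun _ => (1 : ℝ)) p.2 := by
    intro p
    simp [polarCoord_symm_apply, mul_pow, ← mul_add]
  rw [← integral_comp_polarCoord_symm, polarCoord_target, Measure.volume_eq_prod]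
  simp_rw [h]
  rw [setIntegral_prod_mul (fun r => r * f (r ^ 2)) (fun _ => (1 : ℝ))]
  simp only [integral_const, MeasurableSet.univ, measureReal_restrict_apply, univ_inter,
    volume_real_Ioo, sub_neg_eq_add, nonneg_add_self_iff, pi_pos.le, sup_of_le_left, smul_eq_mul,
    mul_one]
  ring

theorem integral_Ioi_mul_inv_add_sq_sq {c : ℝ} (hc : 0 < c) :
    ∫ r in Ioi (0 : ℝ), r * ((c + r ^ 2) ^ 2)⁻¹ = (2 * c)⁻¹ := by
  have hftc := integral_Ioi_of_hasDerivAt_of_nonneg (a := 0) (l := 0)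
    (g := fun r => -(2 * (c + r ^ 2))⁻¹) (g' := fun r => r * ((c + r ^ 2) ^ 2)⁻¹) ?_ ?_ ?_ ?_
  · simpa using hftc
  · exact (Continuous.continuousWithinAt (by fun_prop (disch := intro r; positivity)))
  · intro r _
    refine ((((hasDerivAt_pow 2 r).const_add c).const_mul 2).inv (by positivity)).neg.congr_deriv ?_
    have : c + r ^ 2 ≠ 0 := by positivity
    field_simp
    ring
  · intro r hr
    have : (0 : ℝ) < r := hr
    positivity
  · have : Filter.Tendsto (fun r : ℝ => 2 * (c + r ^ 2)) Filter.atTop Filter.atTop :=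
      (Filter.tendsto_atTop_add_const_left _ c (Filter.tendsto_pow_atTop two_ne_zero)).const_mul_atTop
        two_pos
    simpa using this.inv_tendsto_atTop.neg

noncomputable def ozawaDatum (a b : ℝ) (X Y : ℝ) : ℂ :=
  Complex.exp (-Complex.I * (b : ℂ) * (4 * (a : ℂ))⁻¹ * ((X : ℂ) ^ 2 - (Y : ℂ) ^ 2)) /
    ((a : ℂ) * (1 + (((X : ℂ) / (a : ℂ)) ^ 2 + ((Y : ℂ) / (a : ℂ)) ^ 2) / 2))

theorem norm_ozawaDatum_sq {a : ℝ} (ha : a ≠ 0) (b X Y : ℝ) :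
    ‖ozawaDatum a b X Y‖ ^ 2 = 4 * a ^ 2 * ((2 * a ^ 2 + (X ^ 2 + Y ^ 2)) ^ 2)⁻¹ := by
  have hphase : -Complex.I * b * (4 * (a : ℂ))⁻¹ * ((X : ℂ) ^ 2 - (Y : ℂ) ^ 2) =
      ((-(b * (4 * a)⁻¹ * (X ^ 2 - Y ^ 2)) : ℝ) : ℂ) * Complex.I := by
    push_cast; ring
  have hden : (a : ℂ) * (1 + (((X : ℂ) / a) ^ 2 + ((Y : ℂ) / a) ^ 2) / 2) =
      ((a * (1 + ((X / a) ^ 2 + (Y / a) ^ 2) / 2) : ℝ) : ℂ) := by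
    push_cast; ring
  rw [ozawaDatum, hphase, hden, norm_div, Complex.norm_exp_ofReal_mul_I, Complex.norm_real,
    Real.norm_eq_abs, div_pow, sq_abs]
  field_simp
  ring

/-- the initial datum of Ozawa's blow-up solution of the focusing
Davey–Stewartson II equation,
`U(X, Y) = e^{−ib(4a)^{−1}(X² − Y²)} / (a(1 + ((X/a)² + (Y/a)²)/2))` (with `a ≠ 0`),
satisfies `∫_{ℝ²} |U|² dX dY = 2π`. -/
theorem stmt16 (a b : ℝ) (ha : a ≠ 0) (U : ℝ → ℝ → ℂ)
    (hU : U = fun (X Y : ℝ) =>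
      Complex.exp (-Complex.I * (b : ℂ) * (4 * (a : ℂ))⁻¹ * ((X : ℂ) ^ 2 - (Y : ℂ) ^ 2)) /
        ((a : ℂ) * (1 + (((X : ℂ) / (a : ℂ)) ^ 2 + ((Y : ℂ) / (a : ℂ)) ^ 2) / 2))) :
    ∫ p : ℝ × ℝ, ‖U p.1 p.2‖ ^ 2 = 2 * Real.pi := by
  subst hU
  change ∫ p : ℝ × ℝ, ‖ozawaDatum a b p.1 p.2‖ ^ 2 = 2 * π
  simp_rw [norm_ozawaDatum_sq ha]
  rw [integral_radial_prod (fun s => 4 * a ^ 2 * ((2 * a ^ 2 + s) ^ 2)⁻¹)]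
  simp_rw [mul_left_comm _ (4 * a ^ 2)]
  rw [integral_const_mul, integral_Ioi_mul_inv_add_sq_sq (by positivity)]
  field_simp
  ring
end
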